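/- arXiv:math/0410420 — 4 statements merged into one kernel-verified Lean document; each statement's English description precedes it below -/
import Mathlib

section
/- For every natural number m and every z ∈ ℂ with |z| = πm + π/6, one has |e^{−|Im z|} sin z| ≥ 1/4. -/
open Complex Real

/-! With `u = e^{-2|Im z|}`, the identity `|sin z|² = sin² (Re z) + sinh² (Im z)` becomes
`(e^{-|Im z|} |sin z|)² = u sin² (Re z) + ((1 - u) / 2)²`. If `u ≤ 1/2` the second term alone is
at least `1/16`. Otherwise `(Im z)² < 1/8`, and a point this close to the real axis on the circle of
radius `πm + π/6` has `|Re z| ∈ (πm + 3/8, πm + π/6]`, where `sin² (Re z) > 1/8`; then the first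
term exceeds `1/16`. -/

theorem Complex.norm_sin_sq (z : ℂ) :
    ‖Complex.sin z‖ ^ 2 = Real.sin z.re ^ 2 + Real.sinh z.im ^ 2 := by
  rw [Complex.sq_norm, Complex.sin_eq]
  simp only [← ofReal_sin, ← ofReal_cos, ← ofReal_cosh, ← ofReal_sinh, normSq_apply, add_re,
    add_im, ofReal_re, ofReal_im, mul_re, mul_im, I_re, I_im]
  nlinarith [Real.sin_sq_add_cos_sq z.re, Real.cosh_sq z.im]

theorem Real.exp_neg_mul_sinh (a : ℝ) :
    Real.exp (-a) * Real.sinh a = (1 - Real.exp (-(2 * a))) / 2 := by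
  have hinv : Real.exp (-a) * Real.exp a = 1 := by rw [← Real.exp_add, neg_add_cancel, Real.exp_zero]
  rw [Real.sinh_eq, two_mul, neg_add, Real.exp_add]
  linear_combination hinv / 2

theorem sq_exp_neg_abs_im_mul_norm_sin (z : ℂ) :
    (Real.exp (-|z.im|) * ‖Complex.sin z‖) ^ 2 =
      Real.exp (-(2 * |z.im|)) * Real.sin z.re ^ 2 + ((1 - Real.exp (-(2 * |z.im|))) / 2) ^ 2 := by
  have hsinh : Real.sinh z.im ^ 2 = Real.sinh |z.im| ^ 2 := by
    rw [← Real.abs_sinh, sq_abs]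
  have hexp : Real.exp (-|z.im|) ^ 2 = Real.exp (-(2 * |z.im|)) := by
    rw [← Real.exp_nat_mul]; push_cast; ring_nf
  rw [mul_pow, Complex.norm_sin_sq, hsinh, ← Real.exp_neg_mul_sinh, mul_add, hexp, mul_pow, hexp]

theorem add_lt_of_sq_add_sq_eq {a b c x y : ℝ} (ha : 0 ≤ a) (hc : c ≤ b) (hx : 0 ≤ x)
    (h : x ^ 2 + y ^ 2 = (a + b) ^ 2) (hy : y ^ 2 + c ^ 2 < b ^ 2) : a + c < x := by
  by_contra! hxle
  nlinarith [mul_nonneg (sub_nonneg.2 hc) ha, mul_self_le_mul_self hx hxle]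

theorem one_eighth_lt_sin_sq {t : ℝ} (h₀ : 3 / 8 ≤ t) (h₁ : t ≤ 1) :
    1 / 8 < Real.sin t ^ 2 := by
  have hcube := Real.sin_gt_sub_cube (x := t) (by linarith)
  have hsin : 0.36 < Real.sin t := by
    nlinarith [mul_nonneg (sub_nonneg.2 h₀) (sub_nonneg.2 h₁),
      mul_nonneg (mul_nonneg (sub_nonneg.2 h₀) (sub_nonneg.2 h₁)) (by linarith : (0 : ℝ) ≤ t)]
  nlinarith

theorem one_eighth_lt_sin_sq_of_sq_add_sq_eq (m : ℕ) {x y : ℝ}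
    (h : x ^ 2 + y ^ 2 = (m * π + π / 6) ^ 2) (hy : y ^ 2 < 1 / 8) : 1 / 8 < Real.sin x ^ 2 := by
  have hπ := Real.pi_gt_d2
  have hπ' := Real.pi_lt_d2
  rw [← sq_abs x] at h
  have hlower : m * π + 3 / 8 < |x| :=
    add_lt_of_sq_add_sq_eq (by positivity) (by linarith) (abs_nonneg x) h (by nlinarith)
  have hupper : |x| ≤ m * π + π / 6 :=
    abs_le_of_sq_le_sq' (by nlinarith [sq_nonneg y]) (by positivity) |>.2
  have hperiod : Real.sin |x| ^ 2 = Real.sin (|x| - m * π) ^ 2 := by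
    conv_lhs => rw [← sub_add_cancel |x| (m * π), Real.sin_add_nat_mul_pi]
    rw [mul_pow, ← pow_mul, mul_comm m, pow_mul, neg_one_sq, one_pow, one_mul]
  rw [Real.sin_sq, ← Real.cos_abs, ← Real.sin_sq, hperiod]
  exact one_eighth_lt_sin_sq (by linarith) (by linarith)

theorem sq_lt_one_eighth_of_half_lt_exp {y : ℝ} (h : 1 / 2 < Real.exp (-(2 * |y|))) :
    y ^ 2 < 1 / 8 := by
  have hlog : -Real.log 2 < -(2 * |y|) := by
    rwa [← Real.log_inv, ← one_div, Real.log_lt_iff_lt_exp (by norm_num)]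
  have hlog2 := Real.log_two_lt_d9
  nlinarith [sq_abs y, abs_nonneg y]

/-- On the circle `|z| = πm + π/6` one has `|e^{-|Im z|} sin z| ≥ 1/4`. -/
theorem sin_lower_bound_on_circles (m : ℕ) (z : ℂ)
    (hz : ‖z‖ = Real.pi * m + Real.pi / 6) :
    1 / 4 ≤ Real.exp (-|z.im|) * ‖Complex.sin z‖ := by
  have hsq : (1 / 4) ^ 2 ≤ (Real.exp (-|z.im|) * ‖Complex.sin z‖) ^ 2 := by
    rw [sq_exp_neg_abs_im_mul_norm_sin]
    have hu := (Real.exp_pos (-(2 * |z.im|))).le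
    by_cases hlarge : Real.exp (-(2 * |z.im|)) ≤ 1 / 2
    · nlinarith [mul_nonneg hu (sq_nonneg (Real.sin z.re))]
    · have hcircle : z.re ^ 2 + z.im ^ 2 = (m * π + π / 6) ^ 2 := by
        have hnorm := Complex.sq_norm_sub_sq_re z
        rw [hz] at hnorm
        linear_combination -hnorm
      have hre := one_eighth_lt_sin_sq_of_sq_add_sq_eq m hcircle
        (sq_lt_one_eighth_of_half_lt_exp (not_le.1 hlarge))
      nlinarith
  exact abs_le_of_sq_le_sq' hsq (by positivity) |>.2
end

section
/- Suppose γ = (a_k)_{k≥0} ∈ Γ and r > 0 are chosen so that 2‖γ‖_Γ ≤ r ≤ (2ρ)^{−1}. Then the mapping G_γ maps the closed ball B(r) = {x ∈ X : ‖x‖_X ≤ r} into itself, and for every x, y ∈ B(r) one has ‖G_γ(x) − G_γ(y)‖_X ≤ (1/2)‖x − y‖_X. -/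
open MeasureTheory Complex Real Filter Set

noncomputable section

/-- Lebesgue measure on the interval `(0, 1)`. -/
def mu01 : Measure ℝ := volume.restrict (Set.Ioo (0 : ℝ) 1)

/-- `convPow conv x k` is the `(k+1)`-fold convolution power `x^{∗(k+1)}`. -/
def convPow {X : Type*} (conv : X → X → X) (x : X) : ℕ → X
  | 0 => x
  | k + 1 => conv x (convPow conv x k)

/-- The Γ-norm `‖γ‖_Γ = ‖a₀‖ + Σ_{k≥1} ‖a_k‖/(k-1)!` of a sequence `γ = (a_k)_{k≥0}`. -/
def gammaNorm {X : Type*} [NormedAddCommGroup X] (a : ℕ → X) : ℝ :=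
  ‖a 0‖ + ∑' k : ℕ, ‖a (k + 1)‖ / (Nat.factorial k : ℝ)

/-- The nonlinear map
`G_γ(x) = Σ_{k≥1} (-1)^k x^{∗(2k+1)}/(2k+1)! - a₀ - Σ_{k≥1} a_k ∗ x^{∗k}/k!`. -/
def Gmap {X : Type*} [NormedAddCommGroup X] [NormedSpace ℂ X]
    (conv : X → X → X) (a : ℕ → X) (x : X) : X :=
  (∑' k : ℕ, (((-1 : ℂ) ^ (k + 1)) / (Nat.factorial (2 * k + 3) : ℂ)) • convPow conv x (2 * k + 2))
    - a 0 - ∑' k : ℕ, ((Nat.factorial (k + 1) : ℂ))⁻¹ • conv (a (k + 1)) (convPow conv x k)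

/-- Norm bound for convolution powers: `‖x^{∗(k+1)}‖ ≤ ρ^k ‖x‖^{k+1}`. -/
lemma convPow_norm_le {X : Type*} [NormedAddCommGroup X] [NormedSpace ℂ X]
    (conv : X →ₗ[ℂ] X →ₗ[ℂ] X) {ρ : ℝ} (hρ : 0 ≤ ρ)
    (hbound : ∀ f g : X, ‖conv f g‖ ≤ ρ * ‖f‖ * ‖g‖)
    (x : X) (k : ℕ) :
    ‖convPow (fun u v => conv u v) x k‖ ≤ ρ ^ k * ‖x‖ ^ (k + 1) := by
  induction k with
  | zero => simp [convPow]
  | succ k ih =>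
    have hx : (0:ℝ) ≤ ‖x‖ := norm_nonneg x
    calc ‖convPow (fun u v => conv u v) x (k+1)‖
        = ‖conv x (convPow (fun u v => conv u v) x k)‖ := rfl
      _ ≤ ρ * ‖x‖ * ‖convPow (fun u v => conv u v) x k‖ := hbound _ _
      _ ≤ ρ * ‖x‖ * (ρ ^ k * ‖x‖ ^ (k + 1)) :=
          mul_le_mul_of_nonneg_left ih (mul_nonneg hρ hx)
      _ = ρ ^ (k + 1) * ‖x‖ ^ (k + 1 + 1) := by ring

/-- Lipschitz bound for convolution powers on a ball. -/
lemma convPow_sub_norm_le {X : Type*} [NormedAddCommGroup X] [NormedSpace ℂ X]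
    (conv : X →ₗ[ℂ] X →ₗ[ℂ] X) {ρ : ℝ} (hρ : 0 ≤ ρ)
    (hbound : ∀ f g : X, ‖conv f g‖ ≤ ρ * ‖f‖ * ‖g‖)
    {x y : X} {r : ℝ} (hx : ‖x‖ ≤ r) (hy : ‖y‖ ≤ r) (k : ℕ) :
    ‖convPow (fun u v => conv u v) x k - convPow (fun u v => conv u v) y k‖
      ≤ ((k : ℝ) + 1) * (ρ * r) ^ k * ‖x - y‖ := by
  have hr0 : (0:ℝ) ≤ r := le_trans (norm_nonneg x) hx
  induction k with
  | zero => simp [convPow]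
  | succ k ih =>
    set P : X → ℕ → X := fun z m => convPow (fun u v => conv u v) z m with hP
    have hPx : ‖P x k‖ ≤ ρ ^ k * r ^ (k + 1) := by
      refine le_trans (convPow_norm_le conv hρ hbound x k) ?_
      exact mul_le_mul_of_nonneg_left (pow_le_pow_left₀ (norm_nonneg x) hx (k+1))
        (pow_nonneg hρ k)
    have heq : P x (k+1) - P y (k+1)
        = conv (x - y) (P x k) + conv y (P x k - P y k) := by
      show conv x (P x k) - conv y (P y k) = _
      rw [map_sub conv, map_sub (conv y)]
      simp only [LinearMap.sub_apply]
      abel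
    calc ‖P x (k+1) - P y (k+1)‖
        = ‖conv (x - y) (P x k) + conv y (P x k - P y k)‖ := by rw [heq]
      _ ≤ ‖conv (x - y) (P x k)‖ + ‖conv y (P x k - P y k)‖ := norm_add_le _ _
      _ ≤ ρ * ‖x - y‖ * ‖P x k‖ + ρ * ‖y‖ * ‖P x k - P y k‖ :=
          add_le_add (hbound _ _) (hbound _ _)
      _ ≤ ρ * ‖x - y‖ * (ρ ^ k * r ^ (k + 1))
          + ρ * r * (((k : ℝ) + 1) * (ρ * r) ^ k * ‖x - y‖) := by
          refine add_le_add (mul_le_mul_of_nonneg_left hPx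
            (mul_nonneg hρ (norm_nonneg _))) ?_
          exact mul_le_mul (mul_le_mul_of_nonneg_left hy hρ) ih (norm_nonneg _)
            (mul_nonneg hρ hr0)
      _ = (((k + 1 : ℕ) : ℝ) + 1) * (ρ * r) ^ (k + 1) * ‖x - y‖ := by
          rw [mul_pow, mul_pow]; push_cast; ring

/-- **Contraction lemma.** If `2‖γ‖_Γ ≤ r ≤ (2ρ)⁻¹`, then `G_γ` maps the closed ball of
radius `r` into itself and is `1/2`-Lipschitz there. -/
theorem Gmap_contraction
    {X : Type*} [NormedAddCommGroup X] [NormedSpace ℂ X] [CompleteSpace X]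
    -- `X` is continuously embedded in `L¹(0,1)`
    (ι : X →L[ℂ] Lp ℂ 1 mu01) (hι : Function.Injective ι)
    -- `X` is an algebra with respect to cyclic convolution
    (conv : X →ₗ[ℂ] X →ₗ[ℂ] X)
    (hconv : ∀ f g : X, (ι (conv f g) : ℝ → ℂ)
      =ᵐ[mu01] fun x => ∫ t, (ι f : ℝ → ℂ) (Int.fract (x - t)) * (ι g : ℝ → ℂ) t ∂mu01)
    (ρ : ℝ) (hρ : 0 < ρ) (hbound : ∀ f g : X, ‖conv f g‖ ≤ ρ * ‖f‖ * ‖g‖)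
    -- `γ = (a_k)_{k≥0} ∈ Γ`
    (a : ℕ → X) (ha : Summable (fun k : ℕ => ‖a (k + 1)‖ / (Nat.factorial k : ℝ)))
    (r : ℝ) (hr : 0 < r) (h1 : 2 * gammaNorm a ≤ r) (h2 : r ≤ (2 * ρ)⁻¹) :
    (∀ x : X, ‖x‖ ≤ r → ‖Gmap (fun u v => conv u v) a x‖ ≤ r) ∧
    (∀ x y : X, ‖x‖ ≤ r → ‖y‖ ≤ r →
      ‖Gmap (fun u v => conv u v) a x - Gmap (fun u v => conv u v) a y‖
        ≤ (1 / 2) * ‖x - y‖) := by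
  have hρ0 : (0:ℝ) ≤ ρ := hρ.le
  set P : X → ℕ → X := fun z m => convPow (fun u v => conv u v) z m with hPdef
  set S : X → ℕ → X := fun x k =>
    (((-1 : ℂ) ^ (k + 1)) / (Nat.factorial (2 * k + 3) : ℂ)) • P x (2 * k + 2) with hSdef
  set A : X → ℕ → X := fun x k =>
    ((Nat.factorial (k + 1) : ℂ))⁻¹ • conv (a (k + 1)) (P x k) with hAdef
  have hG : ∀ x : X, Gmap (fun u v => conv u v) a x
      = (∑' k : ℕ, S x k) - a 0 - ∑' k : ℕ, A x k := fun x => rfl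
  -- basic numeric facts
  have hρr : ρ * r ≤ 1 / 2 := by
    have : ρ * r ≤ ρ * (2 * ρ)⁻¹ := mul_le_mul_of_nonneg_left h2 hρ0
    have h3 : ρ * (2 * ρ)⁻¹ = 1 / 2 := by field_simp
    linarith [h3 ▸ this]
  have hρr0 : (0:ℝ) ≤ ρ * r := mul_nonneg hρ0 hr.le
  -- geometric series
  have hgeo : Summable (fun k : ℕ => (1/4 : ℝ) ^ (k + 1)) := by
    have h := summable_geometric_of_lt_one (by norm_num : (0:ℝ) ≤ 1/4) (by norm_num)
    exact (h.mul_left (1/4)).congr (fun k => by rw [pow_succ]; ring)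
  have hgeosum : ∑' k : ℕ, (1/4 : ℝ) ^ (k + 1) = 1/3 := by
    calc ∑' k : ℕ, (1/4 : ℝ) ^ (k + 1) = ∑' k : ℕ, (1/4 : ℝ) * (1/4) ^ k :=
          tsum_congr fun k => by rw [pow_succ]; ring
      _ = (1/4 : ℝ) * ∑' k : ℕ, (1/4 : ℝ) ^ k := tsum_mul_left
      _ = (1/4 : ℝ) * (1 - 1/4)⁻¹ := by
          rw [tsum_geometric_of_lt_one (by norm_num) (by norm_num)]
      _ = 1/3 := by norm_num
  have hpow4 : ∀ k : ℕ, (ρ * r) ^ (2 * k + 2) ≤ (1/4 : ℝ) ^ (k + 1) := by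
    intro k
    have e : ((1:ℝ)/4) ^ (k + 1) = (1/2) ^ (2 * k + 2) := by
      rw [show 2 * k + 2 = 2 * (k + 1) from by ring, pow_mul]; norm_num
    rw [e]
    exact pow_le_pow_left₀ hρr0 hρr _
  -- the tail of the Γ-norm
  set T : ℝ := ∑' k : ℕ, ‖a (k + 1)‖ / (Nat.factorial k : ℝ) with hTdef
  have hT0 : 0 ≤ T := tsum_nonneg fun k => by positivity
  have hTr : ‖a 0‖ + T ≤ r / 2 := by
    have : gammaNorm a = ‖a 0‖ + T := rfl
    linarith [this ▸ h1]
  have hTr' : T ≤ r / 2 := le_trans (by linarith [norm_nonneg (a 0)]) hTr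
  -- norm bounds for the sine-series terms
  have hSnorm : ∀ x : X, ‖x‖ ≤ r → ∀ k : ℕ, ‖S x k‖ ≤ r / 6 * (1/4) ^ (k + 1) := by
    intro x hx k
    have h6 : (6:ℝ) ≤ (Nat.factorial (2 * k + 3) : ℝ) := by
      exact_mod_cast Nat.factorial_le (show 3 ≤ 2 * k + 3 by omega)
    have hnorm : ‖S x k‖ = (Nat.factorial (2 * k + 3) : ℝ)⁻¹ * ‖P x (2 * k + 2)‖ := by
      simp [hSdef, norm_smul]
    have hPb : ‖P x (2 * k + 2)‖ ≤ r * (1/4) ^ (k + 1) := by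
      calc ‖P x (2 * k + 2)‖ ≤ ρ ^ (2 * k + 2) * ‖x‖ ^ (2 * k + 3) :=
            convPow_norm_le conv hρ0 hbound x _
        _ ≤ ρ ^ (2 * k + 2) * r ^ (2 * k + 3) := by
            exact mul_le_mul_of_nonneg_left
              (pow_le_pow_left₀ (norm_nonneg x) hx _) (pow_nonneg hρ0 _)
        _ = r * (ρ * r) ^ (2 * k + 2) := by rw [mul_pow]; ring
        _ ≤ r * (1/4) ^ (k + 1) := mul_le_mul_of_nonneg_left (hpow4 k) hr.le
    calc ‖S x k‖ = (Nat.factorial (2 * k + 3) : ℝ)⁻¹ * ‖P x (2 * k + 2)‖ := hnorm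
      _ ≤ (6:ℝ)⁻¹ * (r * (1/4) ^ (k + 1)) := by
          refine mul_le_mul (inv_anti₀ (by norm_num) h6) hPb (norm_nonneg _)
            (by norm_num)
      _ = r / 6 * (1/4) ^ (k + 1) := by ring
  -- norm bounds for the a-series terms
  have hAnorm : ∀ x : X, ‖x‖ ≤ r → ∀ k : ℕ,
      ‖A x k‖ ≤ 1/2 * (‖a (k + 1)‖ / (Nat.factorial k : ℝ)) := by
    intro x hx k
    have hfk : (0:ℝ) < (Nat.factorial k : ℝ) := by exact_mod_cast Nat.factorial_pos k
    have hfk1 : (0:ℝ) < (Nat.factorial (k+1) : ℝ) := by exact_mod_cast Nat.factorial_pos (k+1)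
    have hnorm : ‖A x k‖ = (Nat.factorial (k + 1) : ℝ)⁻¹ * ‖conv (a (k+1)) (P x k)‖ := by
      simp [hAdef, norm_smul]
    have hfle : (Nat.factorial k : ℝ) ≤ (Nat.factorial (k+1) : ℝ) := by
      exact_mod_cast Nat.factorial_le (Nat.le_succ k)
    have hPb : ‖P x k‖ ≤ ρ ^ k * r ^ (k + 1) := by
      refine le_trans (convPow_norm_le conv hρ0 hbound x k) ?_
      exact mul_le_mul_of_nonneg_left (pow_le_pow_left₀ (norm_nonneg x) hx _)
        (pow_nonneg hρ0 _)
    have hcb : ‖conv (a (k+1)) (P x k)‖ ≤ ‖a (k+1)‖ * (ρ * r) ^ (k + 1) := by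
      calc ‖conv (a (k+1)) (P x k)‖ ≤ ρ * ‖a (k+1)‖ * ‖P x k‖ := hbound _ _
        _ ≤ ρ * ‖a (k+1)‖ * (ρ ^ k * r ^ (k + 1)) :=
            mul_le_mul_of_nonneg_left hPb (mul_nonneg hρ0 (norm_nonneg _))
        _ = ‖a (k+1)‖ * (ρ ^ (k+1) * r ^ (k + 1)) := by ring
        _ = ‖a (k+1)‖ * (ρ * r) ^ (k + 1) := by rw [mul_pow]
    have hhalf : (ρ * r) ^ (k + 1) ≤ 1/2 := by
      calc (ρ * r) ^ (k + 1) ≤ (1/2 : ℝ) ^ (k + 1) := pow_le_pow_left₀ hρr0 hρr _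
        _ ≤ (1/2 : ℝ) ^ 1 := pow_le_pow_of_le_one (by norm_num) (by norm_num) (by omega)
        _ = 1/2 := by norm_num
    calc ‖A x k‖ = (Nat.factorial (k + 1) : ℝ)⁻¹ * ‖conv (a (k+1)) (P x k)‖ := hnorm
      _ ≤ (Nat.factorial k : ℝ)⁻¹ * (‖a (k+1)‖ * (1/2)) := by
          refine mul_le_mul (inv_anti₀ hfk hfle) ?_ (norm_nonneg _)
            (by positivity)
          calc ‖conv (a (k+1)) (P x k)‖ ≤ ‖a (k+1)‖ * (ρ * r) ^ (k + 1) := hcb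
            _ ≤ ‖a (k+1)‖ * (1/2) := mul_le_mul_of_nonneg_left hhalf (norm_nonneg _)
      _ = 1/2 * (‖a (k + 1)‖ / (Nat.factorial k : ℝ)) := by
          rw [div_eq_mul_inv]; ring
  -- summability
  have hSsum : ∀ x : X, ‖x‖ ≤ r → Summable (fun k => ‖S x k‖) := by
    intro x hx
    exact Summable.of_nonneg_of_le (fun k => norm_nonneg _) (hSnorm x hx)
      (hgeo.mul_left (r/6))
  have hAsum : ∀ x : X, ‖x‖ ≤ r → Summable (fun k => ‖A x k‖) := by
    intro x hx
    exact Summable.of_nonneg_of_le (fun k => norm_nonneg _) (hAnorm x hx)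
      (ha.mul_left (1/2))
  -- part 1: maps ball to ball
  have part1 : ∀ x : X, ‖x‖ ≤ r → ‖Gmap (fun u v => conv u v) a x‖ ≤ r := by
    intro x hx
    have hS1 : ‖∑' k : ℕ, S x k‖ ≤ r / 18 := by
      calc ‖∑' k : ℕ, S x k‖ ≤ ∑' k : ℕ, ‖S x k‖ := norm_tsum_le_tsum_norm (hSsum x hx)
        _ ≤ ∑' k : ℕ, r / 6 * (1/4 : ℝ) ^ (k + 1) :=
            Summable.tsum_le_tsum (hSnorm x hx) (hSsum x hx) (hgeo.mul_left (r/6))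
        _ = r / 6 * ∑' k : ℕ, (1/4 : ℝ) ^ (k + 1) := tsum_mul_left
        _ = r / 18 := by rw [hgeosum]; ring
    have hA1 : ‖∑' k : ℕ, A x k‖ ≤ 1/2 * T := by
      calc ‖∑' k : ℕ, A x k‖ ≤ ∑' k : ℕ, ‖A x k‖ := norm_tsum_le_tsum_norm (hAsum x hx)
        _ ≤ ∑' k : ℕ, 1/2 * (‖a (k + 1)‖ / (Nat.factorial k : ℝ)) :=
            Summable.tsum_le_tsum (hAnorm x hx) (hAsum x hx) (ha.mul_left (1/2))
        _ = 1/2 * T := tsum_mul_left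
    calc ‖Gmap (fun u v => conv u v) a x‖
        = ‖(∑' k : ℕ, S x k) - a 0 - ∑' k : ℕ, A x k‖ := by rw [hG]
      _ ≤ ‖(∑' k : ℕ, S x k) - a 0‖ + ‖∑' k : ℕ, A x k‖ := norm_sub_le _ _
      _ ≤ ‖∑' k : ℕ, S x k‖ + ‖a 0‖ + ‖∑' k : ℕ, A x k‖ := by
          linarith [norm_sub_le (∑' k : ℕ, S x k) (a 0)]
      _ ≤ r / 18 + ‖a 0‖ + 1/2 * T := by linarith
      _ ≤ r := by linarith
  refine ⟨part1, ?_⟩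
  -- part 2: contraction
  intro x y hx hy
  have hd0 : (0:ℝ) ≤ ‖x - y‖ := norm_nonneg _
  -- difference bounds for S
  have hSd : ∀ k : ℕ, ‖S x k - S y k‖ ≤ 1/2 * (1/4 : ℝ) ^ (k + 1) * ‖x - y‖ := by
    intro k
    have hfac : ((Nat.factorial (2 * k + 3)) : ℝ)
        = ((2 * k + 3 : ℕ) : ℝ) * ((Nat.factorial (2 * k + 2)) : ℝ) := by
      rw [show 2 * k + 3 = (2 * k + 2) + 1 from rfl, Nat.factorial_succ]; push_cast; ring
    have hf2 : (2:ℝ) ≤ ((Nat.factorial (2 * k + 2)) : ℝ) := by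
      exact_mod_cast Nat.factorial_le (show 2 ≤ 2 * k + 2 by omega)
    have heq : S x k - S y k
        = (((-1 : ℂ) ^ (k + 1)) / (Nat.factorial (2 * k + 3) : ℂ))
            • (P x (2 * k + 2) - P y (2 * k + 2)) := by
      rw [smul_sub]
    have hnorm : ‖S x k - S y k‖
        = (Nat.factorial (2 * k + 3) : ℝ)⁻¹ * ‖P x (2 * k + 2) - P y (2 * k + 2)‖ := by
      rw [heq]; simp [norm_smul]
    have hPd : ‖P x (2 * k + 2) - P y (2 * k + 2)‖
        ≤ ((2 * k + 2 : ℕ) + 1 : ℝ) * (ρ * r) ^ (2 * k + 2) * ‖x - y‖ :=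
      convPow_sub_norm_le conv hρ0 hbound hx hy (2 * k + 2)
    have hfpos : (0:ℝ) < (Nat.factorial (2 * k + 3) : ℝ) := by
      exact_mod_cast Nat.factorial_pos _
    calc ‖S x k - S y k‖
        = (Nat.factorial (2 * k + 3) : ℝ)⁻¹ * ‖P x (2 * k + 2) - P y (2 * k + 2)‖ := hnorm
      _ ≤ (Nat.factorial (2 * k + 3) : ℝ)⁻¹
            * (((2 * k + 2 : ℕ) + 1 : ℝ) * (ρ * r) ^ (2 * k + 2) * ‖x - y‖) :=
          mul_le_mul_of_nonneg_left hPd (by positivity)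
      _ = ((Nat.factorial (2 * k + 2)) : ℝ)⁻¹ * ((ρ * r) ^ (2 * k + 2) * ‖x - y‖) := by
          rw [hfac]
          have h23 : ((2 * k + 3 : ℕ) : ℝ) ≠ 0 := by positivity
          have hf' : ((Nat.factorial (2 * k + 2)) : ℝ) ≠ 0 := by positivity
          field_simp
          push_cast
          ring
      _ ≤ (1/2 : ℝ) * ((1/4 : ℝ) ^ (k + 1) * ‖x - y‖) := by
          refine mul_le_mul ?_ ?_ (by positivity) (by norm_num)
          · rw [show (1/2 : ℝ) = 2⁻¹ by norm_num]
            exact inv_anti₀ (by norm_num) hf2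
          · exact mul_le_mul_of_nonneg_right (hpow4 k) hd0
      _ = 1/2 * (1/4 : ℝ) ^ (k + 1) * ‖x - y‖ := by ring
  -- difference bounds for A
  have hAd : ∀ k : ℕ, ‖A x k - A y k‖
      ≤ ρ * ‖x - y‖ * (‖a (k + 1)‖ / (Nat.factorial k : ℝ)) := by
    intro k
    have hfk : (0:ℝ) < (Nat.factorial k : ℝ) := by exact_mod_cast Nat.factorial_pos k
    have hfac : ((Nat.factorial (k + 1)) : ℝ)
        = ((k + 1 : ℕ) : ℝ) * ((Nat.factorial k) : ℝ) := by
      rw [Nat.factorial_succ]; push_cast; ring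
    have heq : A x k - A y k
        = ((Nat.factorial (k + 1) : ℂ))⁻¹ • conv (a (k + 1)) (P x k - P y k) := by
      rw [map_sub (conv (a (k+1))), smul_sub]
    have hnorm : ‖A x k - A y k‖
        = (Nat.factorial (k + 1) : ℝ)⁻¹ * ‖conv (a (k + 1)) (P x k - P y k)‖ := by
      rw [heq]; simp [norm_smul]
    have hPd : ‖P x k - P y k‖ ≤ ((k : ℝ) + 1) * (ρ * r) ^ k * ‖x - y‖ :=
      convPow_sub_norm_le conv hρ0 hbound hx hy k
    have hcb : ‖conv (a (k + 1)) (P x k - P y k)‖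
        ≤ ρ * ‖a (k + 1)‖ * (((k : ℝ) + 1) * (ρ * r) ^ k * ‖x - y‖) :=
      le_trans (hbound _ _)
        (mul_le_mul_of_nonneg_left hPd (mul_nonneg hρ0 (norm_nonneg _)))
    have hrr1 : (ρ * r) ^ k ≤ 1 := by
      refine pow_le_one₀ hρr0 (by linarith)
    calc ‖A x k - A y k‖
        = (Nat.factorial (k + 1) : ℝ)⁻¹ * ‖conv (a (k + 1)) (P x k - P y k)‖ := hnorm
      _ ≤ (Nat.factorial (k + 1) : ℝ)⁻¹
            * (ρ * ‖a (k + 1)‖ * (((k : ℝ) + 1) * (ρ * r) ^ k * ‖x - y‖)) :=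
          mul_le_mul_of_nonneg_left hcb (by positivity)
      _ = (Nat.factorial k : ℝ)⁻¹ * (ρ * ‖a (k + 1)‖ * ((ρ * r) ^ k * ‖x - y‖)) := by
          rw [hfac]
          have hk1 : ((k + 1 : ℕ) : ℝ) ≠ 0 := by positivity
          field_simp
          push_cast
          ring
      _ ≤ (Nat.factorial k : ℝ)⁻¹ * (ρ * ‖a (k + 1)‖ * (1 * ‖x - y‖)) := by
          refine mul_le_mul_of_nonneg_left ?_ (by positivity)
          refine mul_le_mul_of_nonneg_left ?_ (by positivity)
          exact mul_le_mul_of_nonneg_right hrr1 hd0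
      _ = ρ * ‖x - y‖ * (‖a (k + 1)‖ / (Nat.factorial k : ℝ)) := by
          field_simp
  -- summability of difference series
  have hSdsum : Summable (fun k => ‖S x k - S y k‖) :=
    Summable.of_nonneg_of_le (fun k => norm_nonneg _) hSd
      ((hgeo.mul_left (1/2)).mul_right ‖x - y‖ |>.congr fun k => by ring)
  have hAdsum : Summable (fun k => ‖A x k - A y k‖) :=
    Summable.of_nonneg_of_le (fun k => norm_nonneg _) hAd (ha.mul_left (ρ * ‖x - y‖))
  -- rewrite the difference of Gmaps
  have hGdiff : Gmap (fun u v => conv u v) a x - Gmap (fun u v => conv u v) a y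
      = (∑' k : ℕ, (S x k - S y k)) - ∑' k : ℕ, (A x k - A y k) := by
    rw [hG x, hG y,
      Summable.tsum_sub ((hSsum x hx).of_norm) ((hSsum y hy).of_norm),
      Summable.tsum_sub ((hAsum x hx).of_norm) ((hAsum y hy).of_norm)]
    abel
  have hS2 : ‖∑' k : ℕ, (S x k - S y k)‖ ≤ 1/6 * ‖x - y‖ := by
    calc ‖∑' k : ℕ, (S x k - S y k)‖ ≤ ∑' k : ℕ, ‖S x k - S y k‖ :=
          norm_tsum_le_tsum_norm hSdsum
      _ ≤ ∑' k : ℕ, 1/2 * (1/4 : ℝ) ^ (k + 1) * ‖x - y‖ :=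
          Summable.tsum_le_tsum hSd hSdsum
            ((hgeo.mul_left (1/2)).mul_right ‖x - y‖ |>.congr fun k => by ring)
      _ = (∑' k : ℕ, (1/2 : ℝ) * (1/4 : ℝ) ^ (k + 1)) * ‖x - y‖ := tsum_mul_right
      _ = 1/2 * (∑' k : ℕ, (1/4 : ℝ) ^ (k + 1)) * ‖x - y‖ := by rw [tsum_mul_left]
      _ = 1/6 * ‖x - y‖ := by rw [hgeosum]; ring
  have hA2 : ‖∑' k : ℕ, (A x k - A y k)‖ ≤ 1/4 * ‖x - y‖ := by
    have hρT : ρ * T ≤ 1/4 := by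
      have hT2 : ρ * T ≤ ρ * (r / 2) := mul_le_mul_of_nonneg_left hTr' hρ0
      have : ρ * (r / 2) ≤ 1/4 := by nlinarith
      linarith
    calc ‖∑' k : ℕ, (A x k - A y k)‖ ≤ ∑' k : ℕ, ‖A x k - A y k‖ :=
          norm_tsum_le_tsum_norm hAdsum
      _ ≤ ∑' k : ℕ, ρ * ‖x - y‖ * (‖a (k + 1)‖ / (Nat.factorial k : ℝ)) :=
          Summable.tsum_le_tsum hAd hAdsum (ha.mul_left (ρ * ‖x - y‖))
      _ = ρ * ‖x - y‖ * T := tsum_mul_left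
      _ = ρ * T * ‖x - y‖ := by ring
      _ ≤ 1/4 * ‖x - y‖ := mul_le_mul_of_nonneg_right hρT hd0
  calc ‖Gmap (fun u v => conv u v) a x - Gmap (fun u v => conv u v) a y‖
      = ‖(∑' k : ℕ, (S x k - S y k)) - ∑' k : ℕ, (A x k - A y k)‖ := by rw [hGdiff]
    _ ≤ ‖∑' k : ℕ, (S x k - S y k)‖ + ‖∑' k : ℕ, (A x k - A y k)‖ := norm_sub_le _ _
    _ ≤ 1/6 * ‖x - y‖ + 1/4 * ‖x - y‖ := add_le_add hS2 hA2
    _ ≤ (1/2) * ‖x - y‖ := by linarith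
end
end

section
/- Let r₀ := (4ρ)^{−1}. Then for every γ ∈ Γ with ‖γ‖_Γ ≤ r₀, the equation x = G_γ(x) has a unique solution x = x(γ) in the closed ball {x ∈ X : ‖x‖_X ≤ 2r₀}. -/
open MeasureTheory Complex Real Filter Set

noncomputable section

/-! On the ball `‖x‖ ≤ R := 2r₀` one has `ρR = 1/2`, and iterating
`x^{∗(n+1)} - y^{∗(n+1)} = x ∗ (x^{∗n} - y^{∗n}) + (x - y) ∗ y^{∗n}` gives
`‖x^{∗(n+1)} - y^{∗(n+1)}‖ ≤ (n+1) 2^{-n} ‖x - y‖`. The factor `n+1` is absorbed by the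
factorials, so termwise the sine series of `G_γ` is `1/6`-Lipschitz and the `a_k`-series is
`ρ‖γ‖_Γ ≤ 1/4`-Lipschitz. Hence `G_γ` is a `5/12`-contraction of the ball, and as
`G_γ(0) = -a₀` with `‖a₀‖ ≤ R/2` it maps the ball into itself: Banach's fixed point theorem. -/

open scoped NNReal

theorem LipschitzOnWith.existsUnique_isFixedPt {α : Type*} [MetricSpace α] {f : α → α}
    {s : Set α} {K : ℝ≥0} (hf : LipschitzOnWith K f s) (hK : K < 1) (hsc : IsComplete s)
    (hne : s.Nonempty) (hsf : MapsTo f s s) : ∃! x, x ∈ s ∧ Function.IsFixedPt f x := by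
  have := hsc.completeSpace_coe
  have := hne.to_subtype
  have hF : ContractingWith K (hsf.restrict f s s) := ⟨hK, hf.mapsToRestrict hsf⟩
  refine ⟨_, ⟨(ContractingWith.fixedPoint _ hF).2,
    congrArg Subtype.val (ContractingWith.fixedPoint_isFixedPt (hf := hF))⟩, ?_⟩
  rintro y ⟨hys, hy⟩
  exact congrArg Subtype.val (hF.fixedPoint_unique (x := ⟨y, hys⟩) (Subtype.ext hy))

theorem norm_tsum_sub_tsum_le_of_norm_sub_le {E V : Type*} [NormedAddCommGroup E]
    [NormedAddCommGroup V] [CompleteSpace V] {F : E → ℕ → V} {s : Set E} {b : ℕ → ℝ} {c : ℝ}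
    (hb : HasSum b c) (hF : ∀ x ∈ s, ∀ y ∈ s, ∀ k, ‖F x k - F y k‖ ≤ ‖x - y‖ * b k)
    (h0 : 0 ∈ s) (hF0 : ∀ k, F 0 k = 0) {x y : E} (hx : x ∈ s) (hy : y ∈ s) :
    ‖∑' k, F x k - ∑' k, F y k‖ ≤ c * ‖x - y‖ := by
  have hsum : ∀ z ∈ s, Summable (F z) := fun z hz =>
    Summable.of_norm_bounded (hb.summable.mul_left ‖z‖) fun k => by
      simpa [hF0] using hF z hz 0 h0 k
  rw [← (hsum x hx).tsum_sub (hsum y hy), mul_comm]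
  exact tsum_of_norm_bounded (hb.mul_left _) (hF x hx y hy)

theorem Nat.inv_factorial_succ_mul (n : ℕ) :
    ((n + 1).factorial : ℝ)⁻¹ * (n + 1) = (n.factorial : ℝ)⁻¹ := by
  rw [Nat.factorial_succ, Nat.cast_mul, mul_inv, mul_comm, ← mul_assoc]
  push_cast
  rw [mul_inv_cancel₀ (by positivity), one_mul]

section ConvPow

variable {𝕜 X : Type*} [CommSemiring 𝕜] [NormedAddCommGroup X] [Module 𝕜 X]
  (conv : X →ₗ[𝕜] X →ₗ[𝕜] X) {ρ : ℝ}

theorem zero_convPow (k : ℕ) : convPow (conv · ·) 0 k = 0 := by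
  induction k with
  | zero => rfl
  | succ k ih => simp [convPow, ih]

theorem norm_convPow_le (hρ : 0 ≤ ρ) (hbound : ∀ f g : X, ‖conv f g‖ ≤ ρ * ‖f‖ * ‖g‖)
    (x : X) (k : ℕ) :
    ‖convPow (conv · ·) x k‖ ≤ ‖x‖ * (ρ * ‖x‖) ^ k := by
  induction k with
  | zero => simp [convPow]
  | succ k ih =>
    calc ‖convPow (conv · ·) x (k + 1)‖ ≤ ρ * ‖x‖ * ‖convPow (conv · ·) x k‖ := hbound _ _
      _ ≤ ρ * ‖x‖ * (‖x‖ * (ρ * ‖x‖) ^ k) := by gcongr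
      _ = ‖x‖ * (ρ * ‖x‖) ^ (k + 1) := by ring

theorem norm_convPow_sub_le (hρ : 0 ≤ ρ) (hbound : ∀ f g : X, ‖conv f g‖ ≤ ρ * ‖f‖ * ‖g‖)
    {R : ℝ} {x y : X} (hx : ‖x‖ ≤ R) (hy : ‖y‖ ≤ R) (k : ℕ) :
    ‖convPow (conv · ·) x k - convPow (conv · ·) y k‖ ≤ (k + 1) * (ρ * R) ^ k * ‖x - y‖ := by
  induction k with
  | zero => simp [convPow]
  | succ k ih =>
    have hR : 0 ≤ R := (norm_nonneg x).trans hx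
    have hPy : ‖convPow (conv · ·) y k‖ ≤ R * (ρ * R) ^ k :=
      (norm_convPow_le conv hρ hbound y k).trans (by gcongr)
    have hsplit : convPow (conv · ·) x (k + 1) - convPow (conv · ·) y (k + 1)
        = conv x (convPow (conv · ·) x k - convPow (conv · ·) y k)
          + conv (x - y) (convPow (conv · ·) y k) := by
      simp only [convPow, map_sub, LinearMap.sub_apply]
      abel
    calc ‖convPow (conv · ·) x (k + 1) - convPow (conv · ·) y (k + 1)‖
        ≤ ρ * ‖x‖ * ‖convPow (conv · ·) x k - convPow (conv · ·) y k‖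
          + ρ * ‖x - y‖ * ‖convPow (conv · ·) y k‖ := by
          rw [hsplit]
          exact (norm_add_le _ _).trans (add_le_add (hbound _ _) (hbound _ _))
      _ ≤ ρ * R * ((k + 1) * (ρ * R) ^ k * ‖x - y‖) + ρ * ‖x - y‖ * (R * (ρ * R) ^ k) := by
          gcongr
      _ = ((k + 1 : ℕ) + 1) * (ρ * R) ^ (k + 1) * ‖x - y‖ := by push_cast; ring

theorem inv_factorial_succ_mul_norm_convPow_sub_le (hρ : 0 ≤ ρ)
    (hbound : ∀ f g : X, ‖conv f g‖ ≤ ρ * ‖f‖ * ‖g‖) {R : ℝ} {x y : X} (hx : ‖x‖ ≤ R)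
    (hy : ‖y‖ ≤ R) (n : ℕ) :
    ((n + 1).factorial : ℝ)⁻¹ * ‖convPow (conv · ·) x n - convPow (conv · ·) y n‖
      ≤ (n.factorial : ℝ)⁻¹ * (ρ * R) ^ n * ‖x - y‖ := by
  calc ((n + 1).factorial : ℝ)⁻¹ * ‖convPow (conv · ·) x n - convPow (conv · ·) y n‖
      ≤ ((n + 1).factorial : ℝ)⁻¹ * ((n + 1) * (ρ * R) ^ n * ‖x - y‖) := by
        gcongr
        exact norm_convPow_sub_le conv hρ hbound hx hy n
    _ = (n.factorial : ℝ)⁻¹ * (ρ * R) ^ n * ‖x - y‖ := by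
        rw [← Nat.inv_factorial_succ_mul n]; ring

end ConvPow

section Gmap

variable {X : Type*} [NormedAddCommGroup X] [NormedSpace ℂ X]
  (conv : X →ₗ[ℂ] X →ₗ[ℂ] X) (a : ℕ → X) {ρ R : ℝ}

/- The two series of `Gmap`, indexed from `0`: `sinSeriesTerm conv x k` is the term
`(-1)^(k+1) x^{∗(2k+3)}/(2k+3)!` of `sin x - x`. -/
def sinSeriesTerm (x : X) (k : ℕ) : X :=
  ((-1 : ℂ) ^ (k + 1) / (Nat.factorial (2 * k + 3) : ℂ)) • convPow (conv · ·) x (2 * k + 2)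

def coeffSeriesTerm (x : X) (k : ℕ) : X :=
  ((Nat.factorial (k + 1) : ℂ))⁻¹ • conv (a (k + 1)) (convPow (conv · ·) x k)

theorem Gmap_eq (x : X) :
    Gmap (conv · ·) a x = ∑' k, sinSeriesTerm conv x k - a 0 - ∑' k, coeffSeriesTerm conv a x k :=
  rfl

theorem sinSeriesTerm_zero (k : ℕ) : sinSeriesTerm conv 0 k = 0 := by
  simp [sinSeriesTerm, zero_convPow]

theorem coeffSeriesTerm_zero (k : ℕ) : coeffSeriesTerm conv a 0 k = 0 := by
  simp [coeffSeriesTerm, zero_convPow]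

theorem Gmap_zero : Gmap (conv · ·) a 0 = -a 0 := by
  simp [Gmap_eq, sinSeriesTerm_zero, coeffSeriesTerm_zero]

theorem norm_sinSeriesTerm_sub_le (hρ : 0 ≤ ρ) (hbound : ∀ f g : X, ‖conv f g‖ ≤ ρ * ‖f‖ * ‖g‖)
    (hρR : ρ * R ≤ 1 / 2) {x y : X} (hx : ‖x‖ ≤ R) (hy : ‖y‖ ≤ R) (k : ℕ) :
    ‖sinSeriesTerm conv x k - sinSeriesTerm conv y k‖ ≤ ‖x - y‖ * (1 / 8 * (1 / 4) ^ k) := by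
  have hρR0 : 0 ≤ ρ * R := mul_nonneg hρ ((norm_nonneg x).trans hx)
  have hfact : ((Nat.factorial (2 * k + 2) : ℝ))⁻¹ ≤ 1 / 2 := by
    rw [inv_le_comm₀ (by positivity) (by norm_num), one_div, inv_inv]
    exact_mod_cast (Nat.factorial_le (show 2 ≤ 2 * k + 2 by omega) : (2 : ℕ).factorial ≤ _)
  have hpow : (ρ * R) ^ (2 * k + 2) ≤ 1 / 4 * (1 / 4) ^ k := by
    calc (ρ * R) ^ (2 * k + 2) ≤ (1 / 2) ^ (2 * k + 2) := by gcongr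
      _ = 1 / 4 * (1 / 4) ^ k := by rw [pow_add, pow_mul]; norm_num; ring
  rw [sinSeriesTerm, sinSeriesTerm, ← smul_sub, norm_smul]
  calc ‖(-1 : ℂ) ^ (k + 1) / (Nat.factorial (2 * k + 3) : ℂ)‖
        * ‖convPow (conv · ·) x (2 * k + 2) - convPow (conv · ·) y (2 * k + 2)‖
      ≤ ((Nat.factorial (2 * k + 2) : ℝ))⁻¹ * (ρ * R) ^ (2 * k + 2) * ‖x - y‖ := by
        simpa using inv_factorial_succ_mul_norm_convPow_sub_le conv hρ hbound hx hy (2 * k + 2)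
    _ ≤ 1 / 2 * (1 / 4 * (1 / 4) ^ k) * ‖x - y‖ := by gcongr
    _ = ‖x - y‖ * (1 / 8 * (1 / 4) ^ k) := by ring

theorem norm_coeffSeriesTerm_sub_le (hρ : 0 ≤ ρ)
    (hbound : ∀ f g : X, ‖conv f g‖ ≤ ρ * ‖f‖ * ‖g‖) (hρR : ρ * R ≤ 1) {x y : X}
    (hx : ‖x‖ ≤ R) (hy : ‖y‖ ≤ R) (k : ℕ) :
    ‖coeffSeriesTerm conv a x k - coeffSeriesTerm conv a y k‖
      ≤ ‖x - y‖ * (ρ * (‖a (k + 1)‖ / k.factorial)) := by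
  have hρR0 : 0 ≤ ρ * R := mul_nonneg hρ ((norm_nonneg x).trans hx)
  rw [coeffSeriesTerm, coeffSeriesTerm, ← smul_sub, ← map_sub, norm_smul, norm_inv,
    Complex.norm_natCast]
  calc (((k + 1).factorial : ℝ))⁻¹
        * ‖conv (a (k + 1)) (convPow (conv · ·) x k - convPow (conv · ·) y k)‖
      ≤ (((k + 1).factorial : ℝ))⁻¹
        * (ρ * ‖a (k + 1)‖ * ‖convPow (conv · ·) x k - convPow (conv · ·) y k‖) := by
        gcongr
        exact hbound _ _
    _ = ρ * ‖a (k + 1)‖ * ((((k + 1).factorial : ℝ))⁻¹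
        * ‖convPow (conv · ·) x k - convPow (conv · ·) y k‖) := by ring
    _ ≤ ρ * ‖a (k + 1)‖ * ((k.factorial : ℝ)⁻¹ * (ρ * R) ^ k * ‖x - y‖) :=
        mul_le_mul_of_nonneg_left
          (inv_factorial_succ_mul_norm_convPow_sub_le conv hρ hbound hx hy k) (by positivity)
    _ ≤ ρ * ‖a (k + 1)‖ * ((k.factorial : ℝ)⁻¹ * 1 * ‖x - y‖) := by
        gcongr
        exact pow_le_one₀ hρR0 hρR
    _ = ‖x - y‖ * (ρ * (‖a (k + 1)‖ / k.factorial)) := by ring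

theorem norm_Gmap_sub_le [CompleteSpace X] (hρ : 0 ≤ ρ)
    (hbound : ∀ f g : X, ‖conv f g‖ ≤ ρ * ‖f‖ * ‖g‖) (hρR : ρ * R ≤ 1 / 2)
    (ha : Summable fun k : ℕ => ‖a (k + 1)‖ / (Nat.factorial k : ℝ)) {x y : X}
    (hx : ‖x‖ ≤ R) (hy : ‖y‖ ≤ R) :
    ‖Gmap (conv · ·) a x - Gmap (conv · ·) a y‖
      ≤ (1 / 6 + ρ * ∑' k : ℕ, ‖a (k + 1)‖ / (Nat.factorial k : ℝ)) * ‖x - y‖ := by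
  have h0 : (0 : X) ∈ Metric.closedBall 0 R :=
    Metric.mem_closedBall_self ((norm_nonneg x).trans hx)
  have hgeom : HasSum (fun k : ℕ => 1 / 8 * (1 / 4 : ℝ) ^ k) (1 / 6) := by
    rw [show (1 / 6 : ℝ) = 1 / 8 * (1 - 1 / 4)⁻¹ by norm_num]
    exact (hasSum_geometric_of_lt_one (by norm_num) (by norm_num)).mul_left _
  have hsin := norm_tsum_sub_tsum_le_of_norm_sub_le hgeom
    (fun x hx y hy => norm_sinSeriesTerm_sub_le conv hρ hbound hρR
      (mem_closedBall_zero_iff.1 hx) (mem_closedBall_zero_iff.1 hy))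
    h0 (sinSeriesTerm_zero conv) (mem_closedBall_zero_iff.2 hx) (mem_closedBall_zero_iff.2 hy)
  have hcoeff := norm_tsum_sub_tsum_le_of_norm_sub_le (ha.hasSum.mul_left ρ)
    (fun x hx y hy => norm_coeffSeriesTerm_sub_le conv a hρ hbound (by linarith)
      (mem_closedBall_zero_iff.1 hx) (mem_closedBall_zero_iff.1 hy))
    h0 (coeffSeriesTerm_zero conv a) (mem_closedBall_zero_iff.2 hx) (mem_closedBall_zero_iff.2 hy)
  rw [Gmap_eq, Gmap_eq, add_mul]
  calc _ = ‖(∑' k, sinSeriesTerm conv x k - ∑' k, sinSeriesTerm conv y k)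
        - (∑' k, coeffSeriesTerm conv a x k - ∑' k, coeffSeriesTerm conv a y k)‖ := by
        congr 1; abel
    _ ≤ _ := (norm_sub_le _ _).trans (add_le_add hsin hcoeff)

theorem norm_Gmap_le [CompleteSpace X] (hρ : 0 ≤ ρ)
    (hbound : ∀ f g : X, ‖conv f g‖ ≤ ρ * ‖f‖ * ‖g‖) (hρR : ρ * R ≤ 1 / 2)
    (ha : Summable fun k : ℕ => ‖a (k + 1)‖ / (Nat.factorial k : ℝ)) {x : X} (hx : ‖x‖ ≤ R) :
    ‖Gmap (conv · ·) a x‖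
      ≤ ‖a 0‖ + (1 / 6 + ρ * ∑' k : ℕ, ‖a (k + 1)‖ / (Nat.factorial k : ℝ)) * ‖x‖ := by
  have h := norm_Gmap_sub_le conv a hρ hbound hρR ha hx (y := 0)
    (by simpa using (norm_nonneg x).trans hx)
  rw [Gmap_zero, sub_zero] at h
  calc ‖Gmap (conv · ·) a x‖ ≤ ‖-a 0‖ + ‖Gmap (conv · ·) a x - -a 0‖ :=
        norm_le_norm_add_norm_sub' _ _
    _ ≤ _ := by rw [norm_neg]; gcongr

end Gmap

theorem Gmap_fixed_point_general
    {X : Type*} [NormedAddCommGroup X] [NormedSpace ℂ X] [CompleteSpace X]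
    -- `X` is an algebra with respect to cyclic convolution
    (conv : X →ₗ[ℂ] X →ₗ[ℂ] X)
    (ρ : ℝ) (hρ : 0 < ρ) (hbound : ∀ f g : X, ‖conv f g‖ ≤ ρ * ‖f‖ * ‖g‖)
    -- `γ = (a_k)_{k≥0} ∈ Γ` with `‖γ‖_Γ ≤ r₀ = (4ρ)⁻¹`
    (a : ℕ → X) (ha : Summable (fun k : ℕ => ‖a (k + 1)‖ / (Nat.factorial k : ℝ)))
    (hγ : gammaNorm a ≤ (4 * ρ)⁻¹) :
    ∃! x : X, ‖x‖ ≤ 2 * (4 * ρ)⁻¹ ∧ x = Gmap (fun u v => conv u v) a x := by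
  set R := 2 * (4 * ρ)⁻¹
  set S := ∑' k : ℕ, ‖a (k + 1)‖ / (Nat.factorial k : ℝ)
  have hR : 0 < R := by positivity
  have hρR : ρ * R = 1 / 2 := by simp only [R]; field_simp; norm_num
  have hγR : ‖a 0‖ + S ≤ R / 2 := by rw [show R / 2 = (4 * ρ)⁻¹ by ring]; exact hγ
  have hS : 0 ≤ S := tsum_nonneg fun k => by positivity
  have hK : 1 / 6 + ρ * S ≤ 5 / 12 := by nlinarith [norm_nonneg (a 0)]
  have hlip : LipschitzOnWith (5 / 12) (Gmap (conv · ·) a) (Metric.closedBall 0 R) :=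
    LipschitzOnWith.of_dist_le_mul fun x hx y hy => by
      rw [mem_closedBall_zero_iff] at hx hy
      rw [dist_eq_norm, dist_eq_norm, NNReal.coe_div]
      refine (norm_Gmap_sub_le conv a hρ.le hbound hρR.le ha hx hy).trans ?_
      gcongr
      exact hK.trans_eq (by norm_num)
  have hmaps : MapsTo (Gmap (conv · ·) a) (Metric.closedBall 0 R) (Metric.closedBall 0 R) := by
    intro x hx
    rw [mem_closedBall_zero_iff] at hx ⊢
    calc ‖Gmap (conv · ·) a x‖ ≤ ‖a 0‖ + (1 / 6 + ρ * S) * ‖x‖ :=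
          norm_Gmap_le conv a hρ.le hbound hρR.le ha hx
      _ ≤ ‖a 0‖ + 5 / 12 * R := by gcongr
      _ ≤ R := by linarith
  have := hlip.existsUnique_isFixedPt (by norm_num) Metric.isClosed_closedBall.isComplete
    ⟨0, Metric.mem_closedBall_self hR.le⟩ hmaps
  exact (existsUnique_congr fun x => and_congr mem_closedBall_zero_iff eq_comm).1 this

/-- **Fixed point lemma.** With `r₀ = (4ρ)⁻¹`, for every `γ ∈ Γ` with `‖γ‖_Γ ≤ r₀` the
equation `x = G_γ(x)` has a unique solution in the closed ball `{‖x‖ ≤ 2r₀}`. -/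
theorem Gmap_fixed_point
    {X : Type*} [NormedAddCommGroup X] [NormedSpace ℂ X] [CompleteSpace X]
    -- `X` is continuously embedded in `L¹(0,1)`
    (ι : X →L[ℂ] Lp ℂ 1 mu01) (hι : Function.Injective ι)
    -- `X` is an algebra with respect to cyclic convolution
    (conv : X →ₗ[ℂ] X →ₗ[ℂ] X)
    (hconv : ∀ f g : X, (ι (conv f g) : ℝ → ℂ)
      =ᵐ[mu01] fun x => ∫ t, (ι f : ℝ → ℂ) (Int.fract (x - t)) * (ι g : ℝ → ℂ) t ∂mu01)
    (ρ : ℝ) (hρ : 0 < ρ) (hbound : ∀ f g : X, ‖conv f g‖ ≤ ρ * ‖f‖ * ‖g‖)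
    -- `γ = (a_k)_{k≥0} ∈ Γ` with `‖γ‖_Γ ≤ r₀ = (4ρ)⁻¹`
    (a : ℕ → X) (ha : Summable (fun k : ℕ => ‖a (k + 1)‖ / (Nat.factorial k : ℝ)))
    (hγ : gammaNorm a ≤ (4 * ρ)⁻¹) :
    ∃! x : X, ‖x‖ ≤ 2 * (4 * ρ)⁻¹ ∧ x = Gmap (fun u v => conv u v) a x :=
  Gmap_fixed_point_general conv ρ hρ hbound a ha hγ
end
end

section
/- For every f ∈ L¹(0,1), one has e^{−|Im z|} ∫_0^1 f(t) e^{iz(2t−1)} dt → 0 as |z| → ∞ in ℂ; that is, for every ε > 0 there exists R > 0 such that |∫_0^1 f(t)e^{iz(2t−1)} dt| ≤ ε e^{|Im z|} whenever |z| ≥ R. -/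
/-!
Write `f = (f - g) + g` with `g` smooth and `∫₀¹ ‖f - g‖ ≤ ε / 2`. On `[0, 1]` the kernel
`e^{iz(2t-1)}` has modulus at most `e^{|Im z|}`, so the `f - g` part is at most `ε / 2 · e^{|Im z|}`
for every `z`; integrating the smooth part by parts against the primitive `e^{iz(2t-1)} / (2iz)`
bounds it by `O(e^{|Im z|} / |z|)`.
-/

open MeasureTheory Complex Real Filter Set
open scoped ContDiff

section SmoothApproximation

variable {E F : Type*} [NormedAddCommGroup E] [NormedSpace ℝ E] [FiniteDimensional ℝ E]
  [MeasurableSpace E] [BorelSpace E] [NormedAddCommGroup F] [NormedSpace ℝ F] [CompleteSpace F]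

theorem MeasureTheory.Integrable.exists_contDiff_integral_sub_le {μ : Measure E}
    [IsFiniteMeasure μ] [μ.Regular] {f : E → F} (hf : Integrable f μ) {ε : ℝ} (hε : 0 < ε) :
    ∃ g : E → F, ContDiff ℝ ∞ g ∧ ∫ x, ‖f x - g x‖ ∂μ ≤ ε := by
  obtain ⟨g₀, hg₀_supp, hfg₀, hg₀_cont, hg₀_int⟩ :=
    hf.exists_hasCompactSupport_integral_sub_le (half_pos hε)
  set δ := ε / 2 / (μ.real univ + 1)
  obtain ⟨g, hg_smooth, hg₀g⟩ :=
    (hg₀_supp.uniformContinuous_of_continuous hg₀_cont).exists_contDiff_dist_le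
      (show 0 < δ by positivity)
  have hg₀g_le : ∀ x, ‖g₀ x - g x‖ ≤ δ := fun x => by
    rw [← dist_eq_norm, dist_comm]; exact (hg₀g x).le
  have hg₀g_int : Integrable (fun x => g₀ x - g x) μ :=
    .of_bound (hg₀_cont.sub hg_smooth.continuous).aestronglyMeasurable δ (ae_of_all _ hg₀g_le)
  have hg_int : Integrable g μ :=
    (hg₀_int.sub hg₀g_int).congr (ae_of_all _ fun x => sub_sub_cancel (g₀ x) (g x))
  have hδ : δ * μ.real univ ≤ ε / 2 := by
    rw [div_mul_eq_mul_div, div_le_iff₀ (by positivity)]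
    nlinarith [measureReal_nonneg (μ := μ) (s := univ)]
  refine ⟨g, hg_smooth, ?_⟩
  calc ∫ x, ‖f x - g x‖ ∂μ ≤ ∫ x, ‖f x - g₀ x‖ + ‖g₀ x - g x‖ ∂μ :=
        integral_mono (hf.sub hg_int).norm
          ((hf.sub hg₀_int).norm.add hg₀g_int.norm)
          fun x => norm_sub_le_norm_sub_add_norm_sub _ _ _
    _ = ∫ x, ‖f x - g₀ x‖ ∂μ + ∫ x, ‖g₀ x - g x‖ ∂μ :=
        integral_add (hf.sub hg₀_int).norm hg₀g_int.norm
    _ ≤ ε / 2 + δ * μ.real univ := by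
        gcongr
        simpa [mul_comm] using integral_mono hg₀g_int.norm (integrable_const δ) hg₀g_le
    _ ≤ ε := by linarith

end SmoothApproximation

theorem norm_setIntegral_mul_le {α 𝕜 : Type*} [MeasurableSpace α] [NormedRing 𝕜]
    [NormedSpace ℝ 𝕜] {μ : Measure α} {s : Set α} (hs : MeasurableSet s) {f k : α → 𝕜} {C : ℝ}
    (hf : IntegrableOn f s μ) (hk : ∀ x ∈ s, ‖k x‖ ≤ C) :
    ‖∫ x in s, f x * k x ∂μ‖ ≤ C * ∫ x in s, ‖f x‖ ∂μ := by
  rw [← integral_const_mul]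
  refine norm_integral_le_of_norm_le (hf.norm.const_mul C)
    (ae_restrict_of_forall_mem hs fun x hx => ?_)
  calc ‖f x * k x‖ ≤ ‖f x‖ * ‖k x‖ := norm_mul_le _ _
    _ ≤ ‖f x‖ * C := by gcongr; exact hk x hx
    _ = C * ‖f x‖ := mul_comm _ _

noncomputable def expKernel (z : ℂ) (t : ℝ) : ℂ := cexp (I * z * (2 * t - 1))

theorem hasDerivAt_expKernel (z : ℂ) (t : ℝ) :
    HasDerivAt (expKernel z) (2 * I * z * expKernel z t) t := by
  have h := ((((hasDerivAt_id (t : ℂ)).const_mul 2).sub_const 1).const_mul (I * z)).cexp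
  exact h.comp_ofReal.congr_deriv (by simp only [expKernel, id]; ring)

theorem continuous_expKernel (z : ℂ) : Continuous (expKernel z) :=
  continuous_iff_continuousAt.2 fun t => (hasDerivAt_expKernel z t).continuousAt

theorem norm_expKernel_le (z : ℂ) {t : ℝ} (ht : t ∈ Icc (0 : ℝ) 1) :
    ‖expKernel z t‖ ≤ rexp |z.im| := by
  have h : |2 * t - 1| ≤ 1 := abs_le.2 ⟨by linarith [ht.1], by linarith [ht.2]⟩
  have hre : (I * z * (2 * t - 1)).re = -z.im * (2 * t - 1) := by
    simp [Complex.mul_re, Complex.mul_im]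
  rw [expKernel, Complex.norm_exp, hre, exp_le_exp]
  calc -z.im * (2 * t - 1) ≤ |z.im| * |2 * t - 1| := by
        rw [← abs_neg z.im, ← abs_mul]; exact le_abs_self _
    _ ≤ |z.im| := mul_le_of_le_one_right (abs_nonneg _) h

theorem integrableOn_mul_expKernel {f : ℝ → ℂ} (hf : IntegrableOn f (Ioo 0 1)) (z : ℂ) :
    IntegrableOn (fun t => f t * expKernel z t) (Ioo 0 1) :=
  hf.mul_bdd (continuous_expKernel z).aestronglyMeasurable
    (ae_restrict_of_forall_mem measurableSet_Ioo
      fun _ ht => norm_expKernel_le z (Ioo_subset_Icc_self ht))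

theorem norm_integral_mul_expKernel_le {g : ℝ → ℂ} (hg : ContDiff ℝ 1 g) {z : ℂ} (hz : z ≠ 0) :
    ‖∫ t in Ioo (0 : ℝ) 1, g t * expKernel z t‖ ≤
      (‖g 0‖ + ‖g 1‖ + ∫ t in Ioo (0 : ℝ) 1, ‖deriv g t‖) * (rexp |z.im| / (2 * ‖z‖)) := by
  set B := rexp |z.im| / (2 * ‖z‖)
  set v : ℝ → ℂ := fun t => expKernel z t / (2 * I * z)
  have hv : ∀ t, HasDerivAt v (expKernel z t) t := fun t =>
    ((hasDerivAt_expKernel z t).div_const _).congr_deriv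
      (mul_div_cancel_left₀ _ (by simp [hz]))
  have hv_le : ∀ t ∈ Icc (0 : ℝ) 1, ‖v t‖ ≤ B := fun t ht => by
    simp only [v, B, norm_div, norm_mul, Complex.norm_I, Complex.norm_two, mul_one]
    gcongr
    exact norm_expKernel_le z ht
  have hparts : ∫ t in Ioo (0 : ℝ) 1, g t * expKernel z t =
      g 1 * v 1 - g 0 * v 0 - ∫ t in Ioo (0 : ℝ) 1, deriv g t * v t := by
    simp only [← integral_Ioc_eq_integral_Ioo, ← intervalIntegral.integral_of_le zero_le_one]
    exact intervalIntegral.integral_mul_deriv_eq_deriv_mul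
      (fun t _ => (hg.differentiable one_ne_zero t).hasDerivAt) (fun t _ => hv t)
      ((hg.continuous_deriv le_rfl).intervalIntegrable _ _)
      ((continuous_expKernel z).intervalIntegrable _ _)
  have hint : ‖∫ t in Ioo (0 : ℝ) 1, deriv g t * v t‖ ≤ B * ∫ t in Ioo (0 : ℝ) 1, ‖deriv g t‖ :=
    norm_setIntegral_mul_le measurableSet_Ioo
      ((hg.continuous_deriv le_rfl).integrableOn_Icc.mono_set Ioo_subset_Icc_self)
      fun t ht => hv_le t (Ioo_subset_Icc_self ht)
  calc ‖∫ t in Ioo (0 : ℝ) 1, g t * expKernel z t‖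
      ≤ ‖g 1‖ * ‖v 1‖ + ‖g 0‖ * ‖v 0‖ + ‖∫ t in Ioo (0 : ℝ) 1, deriv g t * v t‖ := by
        rw [hparts]
        refine (norm_sub_le _ _).trans (add_le_add ((norm_sub_le _ _).trans ?_) le_rfl)
        exact add_le_add (norm_mul_le _ _) (norm_mul_le _ _)
    _ ≤ ‖g 1‖ * B + ‖g 0‖ * B + B * ∫ t in Ioo (0 : ℝ) 1, ‖deriv g t‖ := by
        gcongr
        · exact hv_le 1 (right_mem_Icc.2 zero_le_one)
        · exact hv_le 0 (left_mem_Icc.2 zero_le_one)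
    _ = _ := by ring

theorem exists_norm_integral_mul_expKernel_le {g : ℝ → ℂ} (hg : ContDiff ℝ 1 g) {ε : ℝ}
    (hε : 0 < ε) : ∃ R > 0, ∀ z : ℂ, R ≤ ‖z‖ →
      ‖∫ t in Ioo (0 : ℝ) 1, g t * expKernel z t‖ ≤ ε * rexp |z.im| := by
  set C := ‖g 0‖ + ‖g 1‖ + ∫ t in Ioo (0 : ℝ) 1, ‖deriv g t‖
  have hC : 0 ≤ C := by positivity
  refine ⟨C / ε + 1, by positivity, fun z hz => ?_⟩
  have hz0 : 0 < ‖z‖ := by linarith [div_nonneg hC hε.le]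
  have hCz : C ≤ ε * (2 * ‖z‖) := by
    rw [div_add_one hε.ne', div_le_iff₀ hε] at hz
    nlinarith
  calc _ ≤ C * (rexp |z.im| / (2 * ‖z‖)) :=
        norm_integral_mul_expKernel_le hg (norm_pos_iff.1 hz0)
    _ = C / (2 * ‖z‖) * rexp |z.im| := by ring
    _ ≤ ε * rexp |z.im| := by
        gcongr
        rwa [div_le_iff₀ (by positivity)]

/-- **Riemann–Lebesgue type estimate.** For every `f ∈ L¹(0,1)`,
`∫_0^1 f(t) e^{iz(2t-1)} dt = o(e^{|Im z|})` as `|z| → ∞`. -/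
theorem integral_isLittleO_exp_abs_im
    (f : ℝ → ℂ) (hf : IntegrableOn f (Set.Ioo (0 : ℝ) 1)) :
    ∀ ε > 0, ∃ R > 0, ∀ z : ℂ, R ≤ ‖z‖ →
      ‖∫ t in Set.Ioo (0 : ℝ) 1, f t * Complex.exp (Complex.I * z * (2 * t - 1))‖
        ≤ ε * Real.exp |z.im| := by
  intro ε hε
  obtain ⟨g, hg, hfg⟩ := Integrable.exists_contDiff_integral_sub_le hf (half_pos hε)
  obtain ⟨R, hR, hgR⟩ :=
    exists_norm_integral_mul_expKernel_le (hg.of_le (mod_cast le_top)) (half_pos hε)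
  refine ⟨R, hR, fun z hz => ?_⟩
  have hg_int : IntegrableOn g (Ioo 0 1) :=
    hg.continuous.integrableOn_Icc.mono_set Ioo_subset_Icc_self
  have hsplit : ∫ t in Ioo (0 : ℝ) 1, f t * expKernel z t =
      (∫ t in Ioo (0 : ℝ) 1, (f t - g t) * expKernel z t) +
        ∫ t in Ioo (0 : ℝ) 1, g t * expKernel z t := by
    rw [← integral_add (integrableOn_mul_expKernel (f := fun t => f t - g t) (hf.sub hg_int) z)
      (integrableOn_mul_expKernel hg_int z)]
    simp only [sub_mul, sub_add_cancel]
  have hdiff : ‖∫ t in Ioo (0 : ℝ) 1, (f t - g t) * expKernel z t‖ ≤ rexp |z.im| * (ε / 2) :=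
    (norm_setIntegral_mul_le measurableSet_Ioo (hf.sub hg_int)
      fun t ht => norm_expKernel_le z (Ioo_subset_Icc_self ht)).trans
      (mul_le_mul_of_nonneg_left hfg (exp_pos _).le)
  calc ‖∫ t in Ioo (0 : ℝ) 1, f t * expKernel z t‖
      ≤ ‖∫ t in Ioo (0 : ℝ) 1, (f t - g t) * expKernel z t‖ +
          ‖∫ t in Ioo (0 : ℝ) 1, g t * expKernel z t‖ := hsplit ▸ norm_add_le _ _
    _ ≤ rexp |z.im| * (ε / 2) + ε / 2 * rexp |z.im| := add_le_add hdiff (hgR z hz)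
    _ = ε * rexp |z.im| := by ring
end
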